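/- Necessity direction of the balancing-score characterization (Rosenbaum–Rubin): let b : ℝ^d → ℝ^k be measurable. If b(X) is a balancing score, i.e., the covariates X and the treatment indicator Z are conditionally independent given σ(b ∘ X), then the propensity score is determined by b(X): 𝔼[Z | σ(X)] = 𝔼[Z | σ(b ∘ X)] ℙ-a.e. In particular the propensity score is the coarsest balancing score. -/

import Mathlib

open MeasureTheory ProbabilityTheory

/-!
Since `Z` is the indicator of `{Z = 1}`, it suffices to show that conditioning the event
`{Z = 1}` on `σ(X)` instead of the coarser `σ(b ∘ X)` changes nothing. For `s ∈ σ(X)`,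
`∫_s ℙ[Z = 1 | b ∘ X] = 𝔼[ℙ[s | b ∘ X] ℙ[Z = 1 | b ∘ X]] = 𝔼[ℙ[s ∩ {Z = 1} | b ∘ X]] = ∫_s Z`,
the middle step being conditional independence; uniqueness of the conditional expectation
concludes.
-/

namespace MeasureTheory

variable {Ω : Type*} {m mΩ : MeasurableSpace Ω} {μ : Measure Ω}

theorem setIntegral_eq_integral_condExp_indicator_mul [IsFiniteMeasure μ] (hm : m ≤ mΩ)
    {g : Ω → ℝ} (hg : StronglyMeasurable[m] g) (hg_int : Integrable g μ) {s : Set Ω}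
    (hs : MeasurableSet s) :
    ∫ ω in s, g ω ∂μ = ∫ ω, (μ⟦s | m⟧ * g) ω ∂μ := by
  have h_eq : s.indicator g = g * s.indicator 1 := by
    ext ω; by_cases hω : ω ∈ s <;> simp [hω]
  calc ∫ ω in s, g ω ∂μ = ∫ ω, μ[g * s.indicator 1 | m] ω ∂μ := by
        rw [integral_condExp hm, ← h_eq, integral_indicator hs]
    _ = ∫ ω, (g * μ⟦s | m⟧) ω ∂μ := by
        refine integral_congr_ae (condExp_mul_of_stronglyMeasurable_left hg ?_ ?_)
        · exact h_eq ▸ hg_int.indicator hs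
        · exact (integrable_const 1).indicator hs
    _ = ∫ ω, (μ⟦s | m⟧ * g) ω ∂μ := by rw [mul_comm]

end MeasureTheory

namespace ProbabilityTheory

variable {Ω : Type*} {m' m₁ m₂ mΩ : MeasurableSpace Ω} [StandardBorelSpace Ω] {hm' : m' ≤ mΩ}
  {μ : Measure Ω} [IsFiniteMeasure μ]

theorem CondIndep.condExp_indicator_ae_eq_of_le (h : CondIndep m' m₁ m₂ hm' μ) (hle : m' ≤ m₁)
    (hm₁ : m₁ ≤ mΩ) (hm₂ : m₂ ≤ mΩ) {t : Set Ω} (ht : MeasurableSet[m₂] t) :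
    μ⟦t | m₁⟧ =ᵐ[μ] μ⟦t | m'⟧ := by
  have h_mul := (condIndep_iff m' m₁ m₂ hm' hm₁ hm₂ μ).mp h
  refine (ae_eq_condExp_of_forall_setIntegral_eq hm₁ ((integrable_const 1).indicator (hm₂ t ht))
    (fun _ _ _ ↦ integrable_condExp.integrableOn) (fun s hs _ ↦ ?_)
    (stronglyMeasurable_condExp.mono hle).aestronglyMeasurable).symm
  have hs' : MeasurableSet s := hm₁ s hs
  calc ∫ ω in s, (μ⟦t | m'⟧) ω ∂μ = ∫ ω, (μ⟦s | m'⟧ * μ⟦t | m'⟧) ω ∂μ :=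
        setIntegral_eq_integral_condExp_indicator_mul hm' stronglyMeasurable_condExp
          integrable_condExp hs'
    _ = ∫ ω, (μ⟦s ∩ t | m'⟧) ω ∂μ := integral_congr_ae (h_mul s t hs ht).symm
    _ = ∫ ω in s, t.indicator 1 ω ∂μ := by
        rw [integral_condExp hm', ← Set.indicator_indicator, integral_indicator hs']
        rfl

end ProbabilityTheory

theorem indicator_preimage_one_eq_self {Ω : Type*} {Z : Ω → ℝ} (hZ : ∀ ω, Z ω = 0 ∨ Z ω = 1) :
    (Z ⁻¹' {1}).indicator 1 = Z := by
  ext ω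
  rcases hZ ω with h | h <;> simp [h]

/-- Necessity direction of the balancing-score characterization (Rosenbaum–Rubin): if `b(X)` is a
balancing score, i.e. `X` and `Z` are conditionally independent given `σ(b ∘ X)`, then the
propensity score is determined by `b(X)`: `𝔼[Z | σ(X)] = 𝔼[Z | σ(b ∘ X)]` a.e. -/
theorem condexp_eq_of_balancingScore
    {Ω : Type*} [MeasurableSpace Ω] [StandardBorelSpace Ω]
    (μ : Measure Ω) [IsProbabilityMeasure μ]
    {d k : ℕ} (X : Ω → (Fin d → ℝ)) (Z : Ω → ℝ) (b : (Fin d → ℝ) → (Fin k → ℝ))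
    (hX : Measurable X) (hZ : Measurable Z) (hb : Measurable b)
    (hZ01 : ∀ ω, Z ω = 0 ∨ Z ω = 1)
    (hbal : CondIndepFun (MeasurableSpace.comap (b ∘ X) inferInstance)
      (hb.comp hX).comap_le X Z μ) :
    μ[Z | MeasurableSpace.comap X inferInstance]
      =ᵐ[μ] μ[Z | MeasurableSpace.comap (b ∘ X) inferInstance] := by
  rw [← indicator_preimage_one_eq_self hZ01]
  exact ((condIndepFun_iff_condIndep _ _ X Z μ).mp hbal).condExp_indicator_ae_eq_of_le
    (hb.comp (comap_measurable X)).comap_le hX.comap_le hZ.comap_le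
    ⟨{1}, measurableSet_singleton 1, rfl⟩
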